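/- arXiv:1905.04004 — 3 statements merged into one kernel-verified Lean document; each statement's English description precedes it below -/
import Mathlib

section
/- Let Ω ⊂ ℝ^d be measurable with finite measure, J : ℝ^d → ℝ≥0 bounded and even, and suppose there is J₀ > 0 such that ∫_Ω J(x−y) dy ≥ J₀ for a.e. x ∈ Ω. Then for every v ∈ L²(Ω): ‖v‖²_{L²(Ω)} ≤ (‖J‖_∞ / J₀) ‖v‖²_{L¹(Ω)} + (1/(2J₀)) ∫_Ω ∫_Ω J(x−y)(v(y) − v(x))² dy dx. -/
/-!
Expanding `(v y - v x) ^ 2` and using the symmetry of the kernel, the energy equals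
`2 ∫∫ K v(x)² - 2 ∫∫ K v(x) v(y)`; the lower bound on `∫ K(x, ·)` bounds the first term below
by `2 J₀ ‖v‖₂²`, and `K ≤ ‖J‖_∞` bounds the second above by `2 ‖J‖_∞ ‖v‖₁²`.

`J` is not assumed measurable, so Fubini needs care: almost every translate `y ↦ J (x - y)` is
a.e.-measurable on `Ω` (its integral is positive). An exhaustion argument produces a single
measurable set on which `J` is a.e.-measurable and which a.e. contains every such translate
`x - Ω`; hence `(x, y) ↦ J (x - y)` is a.e.-measurable on `Ω × Ω`.
-/

open MeasureTheory Function

theorem exists_ae_maximal_of_sUnion_mem {α : Type*} [MeasurableSpace α] (μ : Measure α)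
    [SFinite μ] {C : Set (Set α)} (hC_meas : ∀ s ∈ C, MeasurableSet s)
    (hC_sUnion : ∀ S ⊆ C, S.Countable → ⋃₀ S ∈ C) :
    ∃ t ∈ C, ∀ s ∈ C, μ (s \ t) = 0 := by
  -- `μ.toFinite` has the null sets of `μ` and makes the supremum below finite
  set ρ := μ.toFinite
  obtain ⟨u, -, hu_lim, hu_mem⟩ := exists_seq_tendsto_sSup (S := ρ '' C)
    ⟨ρ ∅, ∅, by simpa using hC_sUnion ∅ (Set.empty_subset C) Set.countable_empty, rfl⟩
    (OrderTop.bddAbove _)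
  choose s hsC hsu using hu_mem
  have htC : ⋃₀ Set.range s ∈ C :=
    hC_sUnion _ (Set.range_subset_iff.mpr hsC) (Set.countable_range s)
  set t := ⋃₀ Set.range s
  have hsup_le : sSup (ρ '' C) ≤ ρ t :=
    le_of_tendsto' hu_lim fun n => hsu n ▸ measure_mono (Set.subset_sUnion_of_mem ⟨n, rfl⟩)
  refine ⟨t, htC, fun s' hs' => ?_⟩
  have hunion : t ∪ s' ∈ C := by
    simpa using hC_sUnion {t, s'} (Set.insert_subset htC (Set.singleton_subset_iff.mpr hs'))
      ((Set.countable_singleton s').insert t)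
  have hle : ρ (t ∪ s') ≤ ρ t := (le_sSup (Set.mem_image_of_mem ρ hunion)).trans hsup_le
  rw [← toFinite_apply_eq_zero_iff, ← Set.union_sdiff_left,
    measure_sdiff Set.subset_union_left (hC_meas t htC).nullMeasurableSet (measure_ne_top ρ t)]
  exact tsub_eq_zero_of_le hle

theorem exists_ae_maximal_aemeasurable_restrict {α β : Type*} [MeasurableSpace α]
    [MeasurableSpace β] (f : α → β) (μ : Measure α) [SFinite μ] :
    ∃ t, MeasurableSet t ∧ AEMeasurable f (μ.restrict t) ∧
      ∀ s, MeasurableSet s → AEMeasurable f (μ.restrict s) → μ.restrict s ≪ μ.restrict t := by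
  obtain ⟨t, ⟨ht, hft⟩, hmax⟩ := exists_ae_maximal_of_sUnion_mem μ
    (C := {s | MeasurableSet s ∧ AEMeasurable f (μ.restrict s)}) (fun s hs => hs.1)
    fun S hS hS_count => by
      have := hS_count.to_subtype
      refine ⟨MeasurableSet.sUnion hS_count fun s hs => (hS hs).1, ?_⟩
      rw [Set.sUnion_eq_iUnion, aemeasurable_iUnion_iff]
      exact fun s => (hS s.2).2
  exact ⟨t, ht, hft, fun s hs hfs => Measure.absolutelyContinuous_of_le
    (Measure.restrict_mono_ae (ae_le_set.mpr (hmax s ⟨hs, hfs⟩)))⟩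

theorem absolutelyContinuous_map_prod {α β γ : Type*} [MeasurableSpace α] [MeasurableSpace β]
    [MeasurableSpace γ] {f : α × β → γ} (hf : Measurable f) (ν : Measure α) (ρ : Measure β)
    [SFinite ρ] {ξ : Measure γ} (h : ∀ᵐ x ∂ν, ρ.map (fun y => f (x, y)) ≪ ξ) :
    (ν.prod ρ).map f ≪ ξ := by
  refine Measure.AbsolutelyContinuous.mk fun s hs hξs => ?_
  rw [Measure.map_apply hf hs, Measure.prod_apply (hf hs)]
  refine (lintegral_congr_ae ?_).trans lintegral_zero
  filter_upwards [h] with x hx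
  exact (Measure.map_apply (hf.comp measurable_prodMk_left) hs).symm.trans (hx hξs)

section SubLeft

variable {G : Type*} [MeasurableSpace G] [AddCommGroup G] [MeasurableAdd G] [MeasurableNeg G]
  {μ : Measure G} [μ.IsAddLeftInvariant] [μ.IsNegInvariant]

theorem map_sub_left_restrict {Ω : Set G} (hΩ : MeasurableSet Ω) (x : G) :
    (μ.restrict Ω).map (fun y => x - y) = μ.restrict ((fun y => x - y) ⁻¹' Ω) := by
  have hmp := μ.measurePreserving_sub_left x
  have hinv : (fun y => x - y) ⁻¹' ((fun y => x - y) ⁻¹' Ω) = Ω := by ext; simp [sub_sub_cancel]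
  conv_rhs => rw [← hmp.map_eq, Measure.restrict_map hmp.measurable (hmp.measurable hΩ), hinv]

theorem aemeasurable_comp_sub_prod_restrict [MeasurableAdd₂ G] [SFinite μ] {β : Type*}
    [MeasurableSpace β] (ν : Measure G) {Ω : Set G} (hΩ : MeasurableSet Ω) {J : G → β}
    (hJ : ∀ᵐ x ∂ν, AEMeasurable (fun y => J (x - y)) (μ.restrict Ω)) :
    AEMeasurable (fun p : G × G => J (p.1 - p.2)) (ν.prod (μ.restrict Ω)) := by
  obtain ⟨t, -, hJt, hmax⟩ := exists_ae_maximal_aemeasurable_restrict J μ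
  have hac : (ν.prod (μ.restrict Ω)).map (fun p => p.1 - p.2) ≪ μ.restrict t := by
    refine absolutelyContinuous_map_prod measurable_sub ν _ ?_
    filter_upwards [hJ] with x hx
    rw [map_sub_left_restrict hΩ x]
    refine hmax _ ((measurable_const.sub measurable_id) hΩ) ?_
    have hemb : MeasurableEmbedding (fun y => x - y) :=
      (MeasurableEquiv.subLeft x).measurableEmbedding
    rwa [← map_sub_left_restrict hΩ, hemb.aemeasurable_map_iff]
  exact (hJt.mono_ac hac).comp_measurable measurable_sub

end SubLeft

section KernelEnergy

variable {α : Type*} [MeasurableSpace α] {μ : Measure α} {K : α → α → ℝ} {M : ℝ}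

theorem integrable_kernel_mul (hK : AEMeasurable (uncurry K) (μ.prod μ))
    (hKM : ∀ x y, |K x y| ≤ M) {F : α × α → ℝ} (hF : Integrable F (μ.prod μ)) :
    Integrable (fun p => K p.1 p.2 * F p) (μ.prod μ) :=
  hF.bdd_mul hK.aestronglyMeasurable (.of_forall fun p => hKM p.1 p.2)

theorem mul_integral_sq_le_integral_kernel_mul_sq [IsFiniteMeasure μ]
    (hK : AEMeasurable (uncurry K) (μ.prod μ)) (hKM : ∀ x y, |K x y| ≤ M) {J₀ : ℝ}
    (hm : ∀ᵐ x ∂μ, J₀ ≤ ∫ y, K x y ∂μ) {v : α → ℝ} (hv : MemLp v 2 μ) :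
    J₀ * ∫ x, v x ^ 2 ∂μ ≤ ∫ x, ∫ y, K x y * v x ^ 2 ∂μ ∂μ := by
  have hint : Integrable (fun p : α × α => v p.1 ^ 2) (μ.prod μ) :=
    hv.integrable_sq.comp_fst μ
  rw [← integral_const_mul]
  refine integral_mono_ae (hv.integrable_sq.const_mul J₀)
    (integrable_kernel_mul hK hKM hint).integral_prod_left ?_
  filter_upwards [hm] with x hx
  rw [integral_mul_const]
  exact mul_le_mul_of_nonneg_right hx (sq_nonneg _)

theorem integral_kernel_mul_mul_le [SFinite μ] (hK : AEMeasurable (uncurry K) (μ.prod μ))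
    (hKM : ∀ x y, |K x y| ≤ M) {v : α → ℝ} (hv : Integrable v μ) :
    ∫ x, ∫ y, K x y * (v x * v y) ∂μ ∂μ ≤ M * (∫ x, |v x| ∂μ) ^ 2 := by
  have hpointwise (p : α × α) : K p.1 p.2 * (v p.1 * v p.2) ≤ M * (|v p.1| * |v p.2|) :=
    calc K p.1 p.2 * (v p.1 * v p.2) ≤ |K p.1 p.2 * (v p.1 * v p.2)| := le_abs_self _
      _ = |K p.1 p.2| * (|v p.1| * |v p.2|) := by rw [abs_mul, abs_mul]
      _ ≤ M * (|v p.1| * |v p.2|) := by gcongr; exact hKM p.1 p.2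
  rw [integral_integral (integrable_kernel_mul hK hKM (hv.mul_prod hv))]
  calc ∫ p, K p.1 p.2 * (v p.1 * v p.2) ∂μ.prod μ
      ≤ ∫ p, M * (|v p.1| * |v p.2|) ∂μ.prod μ :=
        integral_mono (integrable_kernel_mul hK hKM (hv.mul_prod hv))
          ((hv.abs.mul_prod hv.abs).const_mul M) hpointwise
    _ = M * (∫ x, |v x| ∂μ) ^ 2 := by
        rw [integral_const_mul, integral_prod_mul (fun x => |v x|) (fun x => |v x|), sq]

theorem integral_kernel_mul_sub_sq [IsFiniteMeasure μ] (hK : AEMeasurable (uncurry K) (μ.prod μ))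
    (hKM : ∀ x y, |K x y| ≤ M) (hK_symm : ∀ x y, K x y = K y x) {v : α → ℝ} (hv : MemLp v 2 μ) :
    ∫ x, ∫ y, K x y * (v y - v x) ^ 2 ∂μ ∂μ
      = 2 * ∫ x, ∫ y, K x y * v x ^ 2 ∂μ ∂μ - 2 * ∫ x, ∫ y, K x y * (v x * v y) ∂μ ∂μ := by
  have hv1 := hv.integrable one_le_two
  have hA := integrable_kernel_mul hK hKM (hv.integrable_sq.comp_fst μ)
  have hB := integrable_kernel_mul hK hKM (hv.integrable_sq.comp_snd μ)
  have hC := integrable_kernel_mul hK hKM (hv1.mul_prod hv1)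
  have hE : Integrable (fun p : α × α => K p.1 p.2 * (v p.2 - v p.1) ^ 2) (μ.prod μ) :=
    ((hB.add hA).sub (hC.const_mul 2)).congr (.of_forall fun p => by
      simp only [Pi.add_apply, Pi.sub_apply]; ring)
  have hswap : ∫ p, K p.1 p.2 * v p.2 ^ 2 ∂μ.prod μ = ∫ p, K p.1 p.2 * v p.1 ^ 2 ∂μ.prod μ := by
    rw [← integral_prod_swap]
    simp only [Prod.fst_swap, Prod.snd_swap, hK_symm]
  rw [integral_integral hE, integral_integral hA, integral_integral hC]
  calc ∫ p, K p.1 p.2 * (v p.2 - v p.1) ^ 2 ∂μ.prod μ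
      = ∫ p, (K p.1 p.2 * v p.2 ^ 2 + K p.1 p.2 * v p.1 ^ 2)
          - 2 * (K p.1 p.2 * (v p.1 * v p.2)) ∂μ.prod μ := by
        congr 1; ext p; ring
    _ = _ := by
        rw [integral_sub, integral_add hB hA, integral_const_mul, hswap]
        · ring
        exacts [hB.add hA, hC.const_mul 2]

theorem integral_sq_le_of_kernel_energy [IsFiniteMeasure μ]
    (hK : AEMeasurable (uncurry K) (μ.prod μ)) (hKM : ∀ x y, |K x y| ≤ M)
    (hK_symm : ∀ x y, K x y = K y x) {J₀ : ℝ} (hJ₀ : 0 < J₀)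
    (hm : ∀ᵐ x ∂μ, J₀ ≤ ∫ y, K x y ∂μ) {v : α → ℝ} (hv : MemLp v 2 μ) :
    ∫ x, v x ^ 2 ∂μ ≤ M / J₀ * (∫ x, |v x| ∂μ) ^ 2
      + 1 / (2 * J₀) * ∫ x, ∫ y, K x y * (v y - v x) ^ 2 ∂μ ∂μ := by
  have hlower := mul_integral_sq_le_integral_kernel_mul_sq hK hKM hm hv
  have hcross := integral_kernel_mul_mul_le hK hKM (hv.integrable one_le_two)
  have harith (I L A C : ℝ) (hA : J₀ * I ≤ A) (hC : C ≤ M * L ^ 2) :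
      I ≤ M / J₀ * L ^ 2 + 1 / (2 * J₀) * (2 * A - 2 * C) := by
    rw [show M / J₀ * L ^ 2 + 1 / (2 * J₀) * (2 * A - 2 * C) = (M * L ^ 2 + (A - C)) / J₀ by
      field_simp, le_div_iff₀ hJ₀]
    linarith
  rw [integral_kernel_mul_sub_sq hK hKM hK_symm hv]
  exact harith _ _ _ _ hlower hcross

end KernelEnergy

theorem nonlocal_poincare {d : ℕ} (Ω : Set (Fin d → ℝ)) (hΩ : MeasurableSet Ω)
    (hfin : volume Ω < ⊤) (J : (Fin d → ℝ) → ℝ) (hJ0 : ∀ z, 0 ≤ J z)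
    (Jmax : ℝ) (hJbd : ∀ z, J z ≤ Jmax) (hJeven : ∀ z, J (-z) = J z)
    (J₀ : ℝ) (hJ₀ : 0 < J₀)
    (hm : ∀ᵐ x ∂(volume.restrict Ω), J₀ ≤ ∫ y in Ω, J (x - y))
    (v : (Fin d → ℝ) → ℝ) (hv : MemLp v 2 (volume.restrict Ω)) :
    ∫ x in Ω, (v x) ^ 2
      ≤ (Jmax / J₀) * (∫ x in Ω, |v x|) ^ 2
        + (1 / (2 * J₀)) * ∫ x in Ω, ∫ y in Ω, J (x - y) * (v y - v x) ^ 2 := by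
  have : IsFiniteMeasure (volume.restrict Ω) := isFiniteMeasure_restrict.mpr hfin.ne
  have hslice :
      ∀ᵐ x ∂(volume.restrict Ω), AEMeasurable (fun y => J (x - y)) (volume.restrict Ω) := by
    filter_upwards [hm] with x hx
    exact (Integrable.of_integral_ne_zero (hJ₀.trans_le hx).ne').aemeasurable
  exact integral_sq_le_of_kernel_energy (K := fun x y => J (x - y))
    (aemeasurable_comp_sub_prod_restrict _ hΩ hslice)
    (fun x y => (abs_of_nonneg (hJ0 _)).trans_le (hJbd _))
    (fun x y => by rw [← neg_sub, hJeven]) hJ₀ hm hv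
end

section
/- Let Ω ⊂ ℝ^d be measurable, J : ℝ^d → ℝ≥0 even, ε > 0, a ≥ 0, and u : Ω → ℝ≥0 measurable with all integrals below finite. Then (a/2) ∫_Ω ∫_Ω J(x−y)(u(y) + u(x) + 2ε)(u(y) − u(x))(ln(u(y)+ε) − ln(u(x)+ε)) dy dx ≥ a ∫_Ω ∫_Ω J(x−y)(u(y) − u(x))² dy dx. -/
/-! Pointwise, `(s + σ)(s - σ)(log s - log σ) ≥ 2 (s - σ)²` for `s, σ > 0`, which says that the
logarithmic mean of `s` and `σ` is at most their arithmetic mean. Applying it with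
`s = u y + ε`, `σ = u x + ε`, multiplying by `J (x - y) ≥ 0` and integrating over `Ω × Ω`
gives the bound. -/

open MeasureTheory

theorem Real.two_mul_sub_div_add_le_log_sub_log {s σ : ℝ} (hσ : 0 < σ) (hσs : σ ≤ s) :
    2 * (s - σ) / (s + σ) ≤ Real.log s - Real.log σ := by
  have hs : 0 < s := hσ.trans_le hσs
  have hx₀ : 0 ≤ (s - σ) / (s + σ) := div_nonneg (by linarith) (by linarith)
  have hx₁ : (s - σ) / (s + σ) < 1 := (div_lt_one (by linarith)).2 (by linarith)
  have hquot : (1 + (s - σ) / (s + σ)) / (1 - (s - σ) / (s + σ)) = s / σ := by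
    field_simp [hσ.ne']
    ring
  -- keep the first term `x` of the series `x + x³/3 + ⋯` of `(1/2) log ((1 + x) / (1 - x))`
  have := Real.sum_range_le_log_div hx₀ hx₁ 1
  rw [hquot, Real.log_div hs.ne' hσ.ne'] at this
  simp only [Finset.sum_range_one] at this
  rw [mul_div_assoc]
  linarith

theorem Real.two_mul_sq_sub_le_mul_sub_mul_log_sub_log {s σ : ℝ} (hs : 0 < s) (hσ : 0 < σ) :
    2 * (s - σ) ^ 2 ≤ (s + σ) * (s - σ) * (Real.log s - Real.log σ) := by
  wlog hσs : σ ≤ s generalizing s σ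
  · have := this hσ hs (le_of_not_ge hσs)
    linarith
  have hlog := Real.two_mul_sub_div_add_le_log_sub_log hσ hσs
  rw [div_le_iff₀ (by linarith)] at hlog
  nlinarith [sub_nonneg.2 hσs]

theorem MeasureTheory.integral_integral_mono {α β : Type*} [MeasurableSpace α]
    [MeasurableSpace β] {μ : Measure α} {ν : Measure β} [SFinite μ] [SFinite ν] {f g : α → β → ℝ}
    (hf : Integrable (Function.uncurry f) (μ.prod ν))
    (hg : Integrable (Function.uncurry g) (μ.prod ν)) (hfg : ∀ x y, f x y ≤ g x y) :
    ∫ x, ∫ y, f x y ∂ν ∂μ ≤ ∫ x, ∫ y, g x y ∂ν ∂μ := by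
  rw [integral_integral hf, integral_integral hg]
  exact integral_mono hf hg fun z => hfg z.1 z.2

theorem self_diffusion_entropy_bound_general {d : ℕ} (Ω : Set (Fin d → ℝ))
    (J : (Fin d → ℝ) → ℝ) (hJ0 : ∀ z, 0 ≤ J z)
    (ε a : ℝ) (hε : 0 < ε) (ha : 0 ≤ a)
    (u : (Fin d → ℝ) → ℝ) (hu0 : ∀ x, 0 ≤ u x)
    (h1 : IntegrableOn (fun p : (Fin d → ℝ) × (Fin d → ℝ) =>
      J (p.1 - p.2) * (u p.2 + u p.1 + 2 * ε) * (u p.2 - u p.1) *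
        (Real.log (u p.2 + ε) - Real.log (u p.1 + ε))) (Ω ×ˢ Ω) (volume.prod volume))
    (h2 : IntegrableOn (fun p : (Fin d → ℝ) × (Fin d → ℝ) =>
      J (p.1 - p.2) * (u p.2 - u p.1) ^ 2) (Ω ×ˢ Ω) (volume.prod volume)) :
    (a / 2) * ∫ x in Ω, ∫ y in Ω, J (x - y) * (u y + u x + 2 * ε) * (u y - u x) *
        (Real.log (u y + ε) - Real.log (u x + ε))
      ≥ a * ∫ x in Ω, ∫ y in Ω, J (x - y) * (u y - u x) ^ 2 := by
  have hpointwise : ∀ x y, 2 * (J (x - y) * (u y - u x) ^ 2) ≤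
      J (x - y) * (u y + u x + 2 * ε) * (u y - u x) *
        (Real.log (u y + ε) - Real.log (u x + ε)) := by
    intro x y
    have hlog := Real.two_mul_sq_sub_le_mul_sub_mul_log_sub_log (s := u y + ε) (σ := u x + ε)
      (by linarith [hu0 y]) (by linarith [hu0 x])
    calc 2 * (J (x - y) * (u y - u x) ^ 2)
        = J (x - y) * (2 * (u y + ε - (u x + ε)) ^ 2) := by ring
      _ ≤ J (x - y) * ((u y + ε + (u x + ε)) * (u y + ε - (u x + ε)) *
          (Real.log (u y + ε) - Real.log (u x + ε))) := by gcongr; exact hJ0 _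
      _ = _ := by ring
  rw [IntegrableOn, ← Measure.prod_restrict] at h1 h2
  have hdouble := integral_integral_mono (h2.const_mul 2) h1 hpointwise
  simp only [integral_const_mul] at hdouble
  linarith [mul_le_mul_of_nonneg_left hdouble ha]

theorem self_diffusion_entropy_bound {d : ℕ} (Ω : Set (Fin d → ℝ))
    (hΩ : MeasurableSet Ω) (J : (Fin d → ℝ) → ℝ) (hJ0 : ∀ z, 0 ≤ J z)
    (hJeven : ∀ z, J (-z) = J z) (ε a : ℝ) (hε : 0 < ε) (ha : 0 ≤ a)
    (u : (Fin d → ℝ) → ℝ) (hum : Measurable u) (hu0 : ∀ x, 0 ≤ u x)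
    (h1 : IntegrableOn (fun p : (Fin d → ℝ) × (Fin d → ℝ) =>
      J (p.1 - p.2) * (u p.2 + u p.1 + 2 * ε) * (u p.2 - u p.1) *
        (Real.log (u p.2 + ε) - Real.log (u p.1 + ε))) (Ω ×ˢ Ω) (volume.prod volume))
    (h2 : IntegrableOn (fun p : (Fin d → ℝ) × (Fin d → ℝ) =>
      J (p.1 - p.2) * (u p.2 - u p.1) ^ 2) (Ω ×ˢ Ω) (volume.prod volume)) :
    (a / 2) * ∫ x in Ω, ∫ y in Ω, J (x - y) * (u y + u x + 2 * ε) * (u y - u x) *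
        (Real.log (u y + ε) - Real.log (u x + ε))
      ≥ a * ∫ x in Ω, ∫ y in Ω, J (x - y) * (u y - u x) ^ 2 :=
  self_diffusion_entropy_bound_general Ω J hJ0 ε a hε ha u hu0 h1 h2
end

section
/- Let Ω ⊂ ℝ^d be measurable, J : ℝ^d → ℝ≥0, ε > 0, and u₁, u₂ : Ω → ℝ≥0 measurable with all integrals finite. Then the sum I₁₂ + I₂₁ ≥ 0, where I_{ik} = (1/2) ∫_Ω ∫_Ω J(x−y) [(u_i(y)+ε)(u_k(y)+ε) − (u_i(x)+ε)(u_k(x)+ε)] [ln(u_i(y)+ε) − ln(u_i(x)+ε)] dy dx for {i,k} = {1,2}, i ≠ k. -/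
/-! By Fubini both terms are integrals over `Ω ×ˢ Ω`. Adding the two integrands, the
logarithms combine by `log (ab) = log a + log b` into
`J(x - y) (w(y) - w(x)) (log w(y) - log w(x))` with `w = (u₁ + ε)(u₂ + ε) > 0`, which is
pointwise nonnegative because `log` is monotone. -/

open MeasureTheory Real

lemma sub_mul_log_sub_log_nonneg {p q : ℝ} (hp : 0 < p) (hq : 0 < q) :
    0 ≤ (p - q) * (log p - log q) := by
  rcases le_total q p with hqp | hpq
  · exact mul_nonneg (sub_nonneg.2 hqp) (sub_nonneg.2 (log_le_log hq hqp))
  · exact mul_nonneg_of_nonpos_of_nonpos (sub_nonpos.2 hpq) (sub_nonpos.2 (log_le_log hp hpq))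

lemma mul_sub_mul_mul_log_sub_log_add_nonneg {a₁ a₂ b₁ b₂ : ℝ}
    (ha₁ : 0 < a₁) (ha₂ : 0 < a₂) (hb₁ : 0 < b₁) (hb₂ : 0 < b₂) :
    0 ≤ (b₁ * b₂ - a₁ * a₂) * (log b₁ - log a₁) + (b₂ * b₁ - a₂ * a₁) * (log b₂ - log a₂) := by
  have hsum : (b₁ * b₂ - a₁ * a₂) * (log b₁ - log a₁) + (b₂ * b₁ - a₂ * a₁) * (log b₂ - log a₂)
      = (b₁ * b₂ - a₁ * a₂) * (log (b₁ * b₂) - log (a₁ * a₂)) := by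
    rw [log_mul hb₁.ne' hb₂.ne', log_mul ha₁.ne' ha₂.ne']
    ring
  rw [hsum]
  exact sub_mul_log_sub_log_nonneg (mul_pos hb₁ hb₂) (mul_pos ha₁ ha₂)

theorem cross_diffusion_entropy_nonneg_general {d : ℕ} (Ω : Set (Fin d → ℝ))
    (J : (Fin d → ℝ) → ℝ) (hJ0 : ∀ z, 0 ≤ J z)
    (ε : ℝ) (hε : 0 < ε) (u₁ u₂ : (Fin d → ℝ) → ℝ)
    (h01 : ∀ x, 0 ≤ u₁ x) (h02 : ∀ x, 0 ≤ u₂ x)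
    (h1 : IntegrableOn (fun p : (Fin d → ℝ) × (Fin d → ℝ) =>
      J (p.1 - p.2) * ((u₁ p.2 + ε) * (u₂ p.2 + ε) - (u₁ p.1 + ε) * (u₂ p.1 + ε)) *
        (Real.log (u₁ p.2 + ε) - Real.log (u₁ p.1 + ε))) (Ω ×ˢ Ω) (volume.prod volume))
    (h2 : IntegrableOn (fun p : (Fin d → ℝ) × (Fin d → ℝ) =>
      J (p.1 - p.2) * ((u₂ p.2 + ε) * (u₁ p.2 + ε) - (u₂ p.1 + ε) * (u₁ p.1 + ε)) *
        (Real.log (u₂ p.2 + ε) - Real.log (u₂ p.1 + ε))) (Ω ×ˢ Ω) (volume.prod volume)) :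
    0 ≤ (1 / 2) * (∫ x in Ω, ∫ y in Ω, J (x - y) *
          ((u₁ y + ε) * (u₂ y + ε) - (u₁ x + ε) * (u₂ x + ε)) *
          (Real.log (u₁ y + ε) - Real.log (u₁ x + ε)))
        + (1 / 2) * (∫ x in Ω, ∫ y in Ω, J (x - y) *
          ((u₂ y + ε) * (u₁ y + ε) - (u₂ x + ε) * (u₁ x + ε)) *
          (Real.log (u₂ y + ε) - Real.log (u₂ x + ε))) := by
  have hpos₁ x : 0 < u₁ x + ε := by linarith [h01 x]
  have hpos₂ x : 0 < u₂ x + ε := by linarith [h02 x]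
  rw [← setIntegral_prod _ h1, ← setIntegral_prod _ h2, ← mul_add, ← integral_add h1 h2]
  refine mul_nonneg (by norm_num) (integral_nonneg fun p => ?_)
  exact (mul_nonneg (hJ0 _) (mul_sub_mul_mul_log_sub_log_add_nonneg
    (hpos₁ p.1) (hpos₂ p.1) (hpos₁ p.2) (hpos₂ p.2))).trans_eq (by ring)

theorem cross_diffusion_entropy_nonneg {d : ℕ} (Ω : Set (Fin d → ℝ))
    (hΩ : MeasurableSet Ω) (J : (Fin d → ℝ) → ℝ) (hJ0 : ∀ z, 0 ≤ J z)
    (ε : ℝ) (hε : 0 < ε) (u₁ u₂ : (Fin d → ℝ) → ℝ)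
    (hm1 : Measurable u₁) (hm2 : Measurable u₂)
    (h01 : ∀ x, 0 ≤ u₁ x) (h02 : ∀ x, 0 ≤ u₂ x)
    (h1 : IntegrableOn (fun p : (Fin d → ℝ) × (Fin d → ℝ) =>
      J (p.1 - p.2) * ((u₁ p.2 + ε) * (u₂ p.2 + ε) - (u₁ p.1 + ε) * (u₂ p.1 + ε)) *
        (Real.log (u₁ p.2 + ε) - Real.log (u₁ p.1 + ε))) (Ω ×ˢ Ω) (volume.prod volume))
    (h2 : IntegrableOn (fun p : (Fin d → ℝ) × (Fin d → ℝ) =>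
      J (p.1 - p.2) * ((u₂ p.2 + ε) * (u₁ p.2 + ε) - (u₂ p.1 + ε) * (u₁ p.1 + ε)) *
        (Real.log (u₂ p.2 + ε) - Real.log (u₂ p.1 + ε))) (Ω ×ˢ Ω) (volume.prod volume)) :
    0 ≤ (1 / 2) * (∫ x in Ω, ∫ y in Ω, J (x - y) *
          ((u₁ y + ε) * (u₂ y + ε) - (u₁ x + ε) * (u₂ x + ε)) *
          (Real.log (u₁ y + ε) - Real.log (u₁ x + ε)))
        + (1 / 2) * (∫ x in Ω, ∫ y in Ω, J (x - y) *
          ((u₂ y + ε) * (u₁ y + ε) - (u₂ x + ε) * (u₁ x + ε)) *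
          (Real.log (u₂ y + ε) - Real.log (u₂ x + ε))) :=
  cross_diffusion_entropy_nonneg_general Ω J hJ0 ε hε u₁ u₂ h01 h02 h1 h2
end
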